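/- Let f : ℝ → ℝ be the quantized function f(x) = Σ_{i=0}^{n} a_i·1_{[b_i, b_{i+1})}(x) with real values a_0, …, a_n and breakpoints −∞ = b_0 < b_1 < … < b_n < b_{n+1} = +∞. Then for every fixed x ∈ ℝ, the Gaussian smoothing f_σ(x) converges to the constant (a_0 + a_n)/2 as σ → ∞. That is, in the infinite-smoothing limit the smoothed loss becomes a constant function. -/

import Mathlib

open MeasureTheory ProbabilityTheory Real

open Filter in

lemma gauss_neg_map : (gaussianReal 0 1).map (fun x : ℝ => -1 * x) = gaussianReal 0 1 := by
  rw [gaussianReal_map_const_mul, mul_zero, mul_one]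
  congr 1
  ext
  norm_num

lemma gauss_singleton_zero : (gaussianReal 0 1) {(0:ℝ)} = 0 :=
  gaussianReal_absolutelyContinuous 0 one_ne_zero Real.volume_singleton

lemma gauss_Iio_half : (gaussianReal 0 1) (Set.Iio 0) = 1/2 := by
  have hν : gaussianReal 0 1 = gaussianReal 0 1 := rfl
  set ν : MeasureTheory.Measure ℝ := gaussianReal 0 1 with hνdef
  have hIoi : ν (Set.Iio 0) = ν (Set.Ioi 0) := by
    conv_lhs => rw [hνdef, ← gauss_neg_map]
    rw [Measure.map_apply (measurable_const_mul _) measurableSet_Iio]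
    congr 1
    ext x
    simp [Set.mem_preimage, neg_lt]
  have hIci : ν (Set.Ici 0) = ν (Set.Ioi 0) := by
    refine le_antisymm ?_ (measure_mono Set.Ioi_subset_Ici_self)
    have h1 : Set.Ici (0:ℝ) = {0} ∪ Set.Ioi 0 := by
      ext u; simp [le_iff_lt_or_eq, or_comm, eq_comm]
    rw [h1]
    calc ν ({0} ∪ Set.Ioi 0) ≤ ν {0} + ν (Set.Ioi 0) := measure_union_le _ _
    _ = ν (Set.Ioi 0) := by rw [gauss_singleton_zero]; ring
  have hcompl : ν (Set.Ici 0) = 1 - ν (Set.Iio 0) := by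
    rw [← Set.compl_Iio]
    exact prob_compl_eq_one_sub measurableSet_Iio
  have hle : ν (Set.Iio 0) ≤ 1 := prob_le_one
  have hp : ν (Set.Iio 0) = 1 - ν (Set.Iio 0) := by
    conv_lhs => rw [hIoi, ← hIci, hcompl]
  have hsum : ν (Set.Iio 0) + ν (Set.Iio 0) = 1 := by
    nth_rewrite 1 [hp]
    exact tsub_add_cancel_of_le hle
  have h2 : 2 * ν (Set.Iio 0) = 1 := by rw [two_mul]; exact hsum
  rw [ENNReal.eq_div_iff (by norm_num) (by norm_num)]
  exact h2

lemma gauss_Ici_half : (gaussianReal 0 1) (Set.Ici 0) = 1/2 := by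
  rw [← Set.compl_Iio, prob_compl_eq_one_sub measurableSet_Iio, gauss_Iio_half]
  exact ENNReal.sub_half ENNReal.one_ne_top


/-- The Gaussian smoothing `L_σ(θ) = E_{ε ~ N(0,σ²)}[L (θ + ε)]` of a loss `L`. -/
noncomputable def gaussianSmoothing (L : ℝ → ℝ) (σ θ : ℝ) : ℝ :=
  ∫ ε, L (θ + ε) ∂(gaussianReal 0 ⟨σ ^ 2, sq_nonneg σ⟩)

/-- For a quantized function `f` (value `a 0` on `(−∞, b 0)` and value
`a i.succ` on `[b i, b (i+1))`, with strictly increasing breakpoints `b : Fin n → ℝ`),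
for every fixed `x` the Gaussian smoothing `f_σ(x)` converges to the constant
`(a 0 + a n)/2` as `σ → ∞`: in the infinite-smoothing limit the smoothed loss becomes
a constant function. -/
theorem quantized_gaussian_smoothing_flattens
    (n : ℕ) (a : Fin (n + 1) → ℝ) (b : Fin n → ℝ) (hb : StrictMono b)
    (f : ℝ → ℝ)
    (hf_first : ∀ x : ℝ, (∀ i : Fin n, x < b i) → f x = a 0)
    (hf_piece : ∀ (i : Fin n) (x : ℝ), b i ≤ x → (∀ j : Fin n, i < j → x < b j) →
      f x = a i.succ) :
    ∀ x : ℝ,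
      Filter.Tendsto (fun σ : ℝ => gaussianSmoothing f σ x) Filter.atTop
        (nhds ((a 0 + a (Fin.last n)) / 2)) := by
  -- classification of f
  classical
  have hF : ∀ y : ℝ, f y =
      (fun k : ℕ => a ⟨min k n, Nat.lt_succ_of_le (min_le_right _ _)⟩)
        ((Finset.univ.filter (fun i : Fin n => b i ≤ y)).card) := by
    intro y
    set S := Finset.univ.filter (fun i : Fin n => b i ≤ y) with hS
    by_cases hne : S.Nonempty
    · set i := S.max' hne with hi
      have hbi : b i ≤ y := (Finset.mem_filter.mp (S.max'_mem hne)).2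
      have hgt : ∀ j, i < j → y < b j := by
        intro j hj
        by_contra hcon
        push_neg at hcon
        exact absurd (S.le_max' j (Finset.mem_filter.mpr ⟨Finset.mem_univ _, hcon⟩))
          (not_le.mpr hj)
      have h1 : f y = a i.succ := hf_piece i y hbi hgt
      have hSeq : S = Finset.Iic i := by
        ext j
        simp only [hS, Finset.mem_filter, Finset.mem_Iic, Finset.mem_univ, true_and]
        constructor
        · intro h; exact S.le_max' j (Finset.mem_filter.mpr ⟨Finset.mem_univ _, h⟩)
        · intro h; exact (hb.monotone h).trans hbi
      have hcard : S.card = (i : ℕ) + 1 := by rw [hSeq, Fin.card_Iic]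
      have hmin : min ((i : ℕ) + 1) n = (i : ℕ) + 1 := min_eq_left i.2
      rw [h1, hcard]
      congr 1
      ext
      simp [hmin]
    · have hall : ∀ i : Fin n, y < b i := by
        intro i
        by_contra hcon
        push_neg at hcon
        exact hne ⟨i, Finset.mem_filter.mpr ⟨Finset.mem_univ _, hcon⟩⟩
      have hcard : S.card = 0 := by
        rw [Finset.card_eq_zero, ← Finset.not_nonempty_iff_eq_empty]; exact hne
      rw [hf_first y hall, hcard]
      congr 1
  have hmeas : Measurable f := by
    have hc : Measurable (fun y : ℝ =>
        (Finset.univ.filter (fun i : Fin n => b i ≤ y)).card) := by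
      have hceq : (fun y : ℝ => (Finset.univ.filter (fun i : Fin n => b i ≤ y)).card)
          = fun y => ∑ i : Fin n, if b i ≤ y then 1 else 0 := by
        funext y
        rw [Finset.card_filter]
      rw [hceq]
      exact Finset.measurable_sum _ (fun i _ =>
        Measurable.ite measurableSet_Ici measurable_const measurable_const)
    have : f = (fun k : ℕ => a ⟨min k n, Nat.lt_succ_of_le (min_le_right _ _)⟩) ∘
        (fun y : ℝ => (Finset.univ.filter (fun i : Fin n => b i ≤ y)).card) := by
      funext y; exact hF y
    rw [this]
    exact measurable_from_top.comp hc
  -- uniform bound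
  obtain ⟨C, hbound⟩ : ∃ C : ℝ, ∀ y, |f y| ≤ C := by
    refine ⟨Finset.univ.sup' Finset.univ_nonempty (fun j : Fin (n+1) => |a j|), fun y => ?_⟩
    rw [hF y]
    exact Finset.le_sup' (fun j : Fin (n+1) => |a j|) (Finset.mem_univ _)
  cases n with
  | zero =>
    intro x
    have hf0 : ∀ y, f y = a 0 := fun y => hf_first y (fun i => i.elim0)
    have hval : ∀ σ : ℝ, gaussianSmoothing f σ x = a 0 := by
      intro σ
      unfold gaussianSmoothing
      have := instIsProbabilityMeasureGaussianReal 0 ⟨σ ^ 2, sq_nonneg σ⟩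
      simp [hf0]
    have hlast : a (Fin.last 0) = a 0 := by congr 1
    have htarget : (a 0 + a (Fin.last 0)) / 2 = a 0 := by rw [hlast]; ring
    rw [htarget]
    exact Filter.Tendsto.congr (fun σ => (hval σ).symm) tendsto_const_nhds
  | succ m =>
    intro x
    set ν : MeasureTheory.Measure ℝ := gaussianReal 0 1 with hνdef
    have hA : ∀ y : ℝ, y < b 0 → f y = a 0 := fun y hy =>
      hf_first y (fun i => hy.trans_le (hb.monotone (Fin.zero_le i)))
    have hB : ∀ y : ℝ, b (Fin.last m) ≤ y → f y = a (Fin.last (m+1)) := by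
      intro y hy
      rw [hf_piece (Fin.last m) y hy (fun j hj => absurd (Fin.le_last j) (not_le.mpr hj)),
        Fin.succ_last]
    -- change of variables
    have hmap : ∀ σ : ℝ, 0 < σ →
        gaussianSmoothing f σ x = ∫ u, f (x + σ * u) ∂ν := by
      intro σ hσ
      unfold gaussianSmoothing
      have h1 : ν.map (fun u => σ * u) = gaussianReal 0 ⟨σ ^ 2, sq_nonneg σ⟩ := by
        rw [hνdef, gaussianReal_map_const_mul, mul_zero, mul_one]
        rfl
      rw [← h1]
      exact integral_map (measurable_const_mul σ).aemeasurable
        (hmeas.comp (measurable_const_add x)).aestronglyMeasurable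
    set g : ℝ → ℝ := fun u => if u < 0 then a 0 else a (Fin.last (m+1)) with hgdef
    have hg_int : ∫ u, g u ∂ν = (a 0 + a (Fin.last (m+1))) / 2 := by
      have hgeq : g = (Set.Iio (0:ℝ)).indicator (fun _ => a 0) +
          (Set.Ici (0:ℝ)).indicator (fun _ => a (Fin.last (m+1))) := by
        funext u
        by_cases h : u < 0
        · simp [hgdef, Set.indicator_apply, h, not_le.mpr h]
        · simp [hgdef, Set.indicator_apply, h, not_lt.mp h]
      rw [hgeq]
      simp only [Pi.add_apply]
      rw [integral_add ((integrable_const _).indicator measurableSet_Iio)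
        ((integrable_const _).indicator measurableSet_Ici)]
      rw [integral_indicator_const _ measurableSet_Iio,
        integral_indicator_const _ measurableSet_Ici]
      rw [hνdef, measureReal_def, measureReal_def, gauss_Iio_half, gauss_Ici_half]
      norm_num
      ring
    have h0 : ∀ᵐ u ∂ν, u ≠ (0:ℝ) := by
      rw [ae_iff]
      have hset : {u : ℝ | ¬ u ≠ 0} = {0} := by ext u; simp
      rw [hset, hνdef]
      exact gauss_singleton_zero
    have hDC : Filter.Tendsto (fun σ : ℝ => ∫ u, f (x + σ * u) ∂ν) Filter.atTop
        (nhds (∫ u, g u ∂ν)) := by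
      apply tendsto_integral_filter_of_dominated_convergence (fun _ => C)
      · exact Filter.Eventually.of_forall (fun σ =>
          (hmeas.comp ((measurable_const_mul σ).const_add x)).aestronglyMeasurable)
      · exact Filter.Eventually.of_forall (fun σ => ae_of_all _ (fun u => by
          rw [Real.norm_eq_abs]; exact hbound _))
      · exact integrable_const C
      · filter_upwards [h0] with u hu
        rcases lt_or_gt_of_ne hu with h | h
        · have hgu : g u = a 0 := if_pos h
          rw [hgu]
          apply tendsto_const_nhds.congr'
          filter_upwards [Filter.eventually_ge_atTop ((b 0 - x) / u + 1)] with σ hσ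
          have h1 : (b 0 - x) / u < σ := lt_of_lt_of_le (lt_add_one _) hσ
          have h2 : σ * u < (b 0 - x) / u * u := mul_lt_mul_of_neg_right h1 h
          rw [div_mul_cancel₀ _ (ne_of_lt h)] at h2
          exact (hA (x + σ * u) (by linarith)).symm
        · have hgu : g u = a (Fin.last (m+1)) := if_neg (not_lt.mpr h.le)
          rw [hgu]
          apply tendsto_const_nhds.congr'
          filter_upwards [Filter.eventually_ge_atTop ((b (Fin.last m) - x) / u)] with σ hσ
          rw [div_le_iff₀ h] at hσ
          exact (hB (x + σ * u) (by linarith)).symm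
    rw [hg_int] at hDC
    apply hDC.congr'
    filter_upwards [Filter.eventually_gt_atTop (0:ℝ)] with σ hσ
    exact (hmap σ hσ).symm
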